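/- arXiv:2603.25816 — 2 statements merged into one kernel-verified Lean document; each statement's English description precedes it below -/
import Mathlib

section
/- For every k ∈ ℕ and every x ∈ ℝⁿ, the probability under the trajectory measure of the reach-avoid event equals the value function: Pr^{x}(RA_k) = V_k(x), where V is defined by the dynamic-programming recursion. -/
/-!
First-step analysis. The recursion for `Pr` says that a trajectory from `x` is `x` followed by a
trajectory from a `κ x`-distributed point, so `Pr x A = ∫⁻ y, Pr y (prependState x ⁻¹' A) ∂κ x`.
Prepending `x` pulls `RA_{k+1}` back to the whole space, to `RA_k` or to `∅` according as `x` lies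
in `X_r`, in `X_s \ X_r` or in `X_u`, which is exactly the case split in the recursion for `V`;
induction on `k` concludes.
-/

open MeasureTheory ProbabilityTheory Finset

attribute [local instance] Classical.propDecidable

/-- The reach-avoid value function `V_k` defined by the dynamic-programming recursion:
`V_k(x) = 1` on `X_r`, `V_k(x) = 0` on `X_u = (X_s)ᶜ`, `V_0(x) = 0` on `X_s \\ X_r`, and
`V_k(x) = E[V_{k-1}(x') | x]` on `X_s \\ X_r` for `k ≥ 1` (assuming `X_r ⊆ X_s`). -/
noncomputable def reachAvoidValue {n : ℕ}
    (κ : Kernel (Fin n → ℝ) (Fin n → ℝ)) (Xs Xr : Set (Fin n → ℝ)) :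
    ℕ → (Fin n → ℝ) → ℝ
  | 0, x => if x ∈ Xr then 1 else 0
  | k + 1, x =>
      if x ∈ Xr then 1
      else if x ∈ Xs then ∫ y, reachAvoidValue κ Xs Xr k y ∂(κ x)
      else 0

/-- Prepend a state at time `0` to a trajectory. -/
def prependState {n : ℕ} (x : Fin n → ℝ) (ω : ℕ → (Fin n → ℝ)) : ℕ → (Fin n → ℝ)
  | 0 => x
  | k + 1 => ω k

/-- The reach-avoid event with horizon `H`: there is `k ≤ H` with `x_k ∈ X_r` and
`x_{k'} ∉ X_u = (X_s)ᶜ` for all `k' < k`. -/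
def reachAvoidEvent {n : ℕ} (Xs Xr : Set (Fin n → ℝ)) (H : ℕ) :
    Set (ℕ → (Fin n → ℝ)) :=
  {ω | ∃ k ≤ H, ω k ∈ Xr ∧ ∀ k' < k, ω k' ∉ Xsᶜ}

namespace MeasureTheory.Measure

variable {α β γ : Type*} [MeasurableSpace α] [MeasurableSpace β] [MeasurableSpace γ]
  {μ : Measure α} {ν : α → Measure β} {g : β → γ} {s : Set γ}

theorem aemeasurable_of_bind_ne_zero {f : α → Measure β} (h : μ.bind f ≠ 0) :
    AEMeasurable f μ :=
  AEMeasurable.of_map_ne_zero fun hf => h (by rw [bind, hf, join_zero])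

theorem bind_map_apply (hg : Measurable g) (h : μ.bind (fun a => (ν a).map g) ≠ 0)
    (hs : MeasurableSet s) :
    μ.bind (fun a => (ν a).map g) s = ∫⁻ a, ν a (g ⁻¹' s) ∂μ := by
  rw [bind_apply hs (aemeasurable_of_bind_ne_zero h)]
  simp only [map_apply hg hs]

theorem aemeasurable_apply_preimage_of_bind_map_ne_zero (hg : Measurable g)
    (h : μ.bind (fun a => (ν a).map g) ≠ 0) (hs : MeasurableSet s) :
    AEMeasurable (fun a => ν a (g ⁻¹' s)) μ := by
  simpa only [Function.comp_def, map_apply hg hs] using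
    (measurable_coe hs).comp_aemeasurable (aemeasurable_of_bind_ne_zero h)

end MeasureTheory.Measure

section ReachAvoid

variable {n : ℕ} {Xs Xr : Set (Fin n → ℝ)}

theorem measurable_prependState (x : Fin n → ℝ) : Measurable (prependState x) := by
  refine measurable_pi_lambda _ fun k => ?_
  cases k with
  | zero => exact measurable_const
  | succ k => exact measurable_pi_apply k

theorem reachAvoidEvent_eq_biUnion (H : ℕ) :
    reachAvoidEvent Xs Xr H =
      ⋃ k ∈ Set.Iic H, (fun ω => ω k) ⁻¹' Xr ∩ ⋂ k' ∈ Set.Iio k, (fun ω => ω k') ⁻¹' Xs := by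
  ext ω
  simp only [reachAvoidEvent, Set.mem_ofPred_eq, Set.mem_iUnion, Set.mem_inter_iff,
    Set.mem_iInter, Set.mem_preimage, Set.mem_Iic, Set.mem_Iio, Set.notMem_compl_iff, exists_prop]

theorem measurableSet_reachAvoidEvent (hXs : MeasurableSet Xs) (hXr : MeasurableSet Xr)
    (H : ℕ) : MeasurableSet (reachAvoidEvent Xs Xr H) := by
  rw [reachAvoidEvent_eq_biUnion]
  exact .biUnion (Set.to_countable _) fun k _ => (measurable_pi_apply k hXr).inter <|
    .biInter (Set.to_countable _) fun k' _ => measurable_pi_apply k' hXs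

theorem prependState_preimage_reachAvoidEvent_zero (x : Fin n → ℝ) :
    prependState x ⁻¹' reachAvoidEvent Xs Xr 0 = if x ∈ Xr then Set.univ else ∅ := by
  ext ω
  simp [reachAvoidEvent, prependState]

theorem prependState_mem_reachAvoidEvent_succ {x : Fin n → ℝ} {ω : ℕ → Fin n → ℝ} {H : ℕ} :
    prependState x ω ∈ reachAvoidEvent Xs Xr (H + 1) ↔
      x ∈ Xr ∨ x ∈ Xs ∧ ω ∈ reachAvoidEvent Xs Xr H := by
  constructor
  · rintro ⟨_ | k, hk, hr, hs⟩
    · exact .inl hr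
    · exact .inr ⟨by simpa [prependState] using hs 0 k.succ_pos,
        k, by omega, hr, fun k' hk' => hs (k' + 1) (by omega)⟩
  · rintro (hx | ⟨hx, k, hk, hr, hs⟩)
    · exact ⟨0, H.succ.zero_le, hx, fun _ h => absurd h (Nat.not_lt_zero _)⟩
    · refine ⟨k + 1, by omega, hr, fun k' hk' => ?_⟩
      cases k' with
      | zero => simpa [prependState] using hx
      | succ k' => exact hs k' (by omega)

theorem prependState_preimage_reachAvoidEvent_succ (x : Fin n → ℝ) (H : ℕ) :
    prependState x ⁻¹' reachAvoidEvent Xs Xr (H + 1) =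
      if x ∈ Xr then Set.univ else if x ∈ Xs then reachAvoidEvent Xs Xr H else ∅ := by
  ext ω
  split_ifs <;> simp_all [prependState_mem_reachAvoidEvent_succ]

end ReachAvoid

theorem trajectoryMeasure_reachAvoidEvent_eq_value_general
    {n : ℕ} (κ : Kernel (Fin n → ℝ) (Fin n → ℝ)) [IsMarkovKernel κ]
    (Xs Xr : Set (Fin n → ℝ))
    (hXs : MeasurableSet Xs) (hXr : MeasurableSet Xr)
    (Pr : (Fin n → ℝ) → Measure (ℕ → (Fin n → ℝ)))
    (hPrProb : ∀ x, IsProbabilityMeasure (Pr x))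
    (hPrRec : ∀ x, Pr x = (κ x).bind (fun y => (Pr y).map (prependState x))) :
    ∀ (k : ℕ) (x : Fin n → ℝ),
      (Pr x (reachAvoidEvent Xs Xr k)).toReal = reachAvoidValue κ Xs Xr k x := by
  have hbind (x) : (κ x).bind (fun y => (Pr y).map (prependState x)) ≠ 0 :=
    hPrRec x ▸ (hPrProb x).ne_zero
  have hRA := measurableSet_reachAvoidEvent hXs hXr
  have first_step (x) (k) : Pr x (reachAvoidEvent Xs Xr k) =
      ∫⁻ y, Pr y (prependState x ⁻¹' reachAvoidEvent Xs Xr k) ∂κ x := by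
    rw [hPrRec x, Measure.bind_map_apply (measurable_prependState x) (hbind x) (hRA k)]
  intro k
  induction k with
  | zero =>
    intro x
    rw [first_step, prependState_preimage_reachAvoidEvent_zero]
    split_ifs with hx <;> simp [reachAvoidValue, hx]
  | succ H ih =>
    intro x
    have hae := Measure.aemeasurable_apply_preimage_of_bind_map_ne_zero
      (measurable_prependState x) (hbind x) (hRA (H + 1))
    rw [prependState_preimage_reachAvoidEvent_succ] at hae
    rw [first_step, prependState_preimage_reachAvoidEvent_succ]
    split_ifs at hae ⊢ with hr hs
    · simp [reachAvoidValue, hr]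
    · rw [← integral_toReal hae (.of_forall fun _ => measure_lt_top _ _)]
      simp [reachAvoidValue, hr, hs, ih]
    · simp [reachAvoidValue, hr, hs]

/-- For every `k ∈ ℕ` and every `x ∈ ℝⁿ`, the probability under the
trajectory measure of the reach-avoid event equals the value function:
`Pr^x(RA_k) = V_k(x)`. -/
theorem trajectoryMeasure_reachAvoidEvent_eq_value
    {n : ℕ} (κ : Kernel (Fin n → ℝ) (Fin n → ℝ)) [IsMarkovKernel κ]
    (Xs Xr : Set (Fin n → ℝ))
    (hXs : MeasurableSet Xs) (hXr : MeasurableSet Xr) (hXrXs : Xr ⊆ Xs)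
    (Pr : (Fin n → ℝ) → Measure (ℕ → (Fin n → ℝ)))
    (hPrProb : ∀ x, IsProbabilityMeasure (Pr x))
    (hPrRec : ∀ x, Pr x = (κ x).bind (fun y => (Pr y).map (prependState x))) :
    ∀ (k : ℕ) (x : Fin n → ℝ),
      (Pr x (reachAvoidEvent Xs Xr k)).toReal = reachAvoidValue κ Xs Xr k x :=
  trajectoryMeasure_reachAvoidEvent_eq_value_general κ Xs Xr hXs hXr Pr hPrProb hPrRec
end

section
/- Under the time-varying certificate conditions (a)–(f) with horizon H, the value function satisfies V_H(x) ≥ γ − (α_H + Σ_{i=1}^{H} β_i) for every x ∈ X₀; in particular inf_{x ∈ X₀} V_H(x) ≥ γ − (α_H + Σ_{i=1}^{H} β_i). -/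
open MeasureTheory ProbabilityTheory Finset

attribute [local instance] Classical.propDecidable

lemma reachAvoidValue_measurable {n : ℕ}
    (κ : Kernel (Fin n → ℝ) (Fin n → ℝ)) [IsMarkovKernel κ]
    (Xs Xr : Set (Fin n → ℝ)) (hXs : MeasurableSet Xs) (hXr : MeasurableSet Xr) :
    ∀ k, Measurable (reachAvoidValue κ Xs Xr k) := by
  intro k
  induction k with
  | zero =>
      simp only [reachAvoidValue]
      exact Measurable.ite hXr measurable_const measurable_const
  | succ k ih =>
      simp only [reachAvoidValue]
      refine Measurable.ite hXr measurable_const (Measurable.ite hXs ?_ measurable_const)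
      have : StronglyMeasurable fun x => ∫ y, reachAvoidValue κ Xs Xr k y ∂(κ x) := by
        apply MeasureTheory.StronglyMeasurable.integral_kernel_prod_right
          (f := fun (_ : Fin n → ℝ) y => reachAvoidValue κ Xs Xr k y)
        exact (ih.comp measurable_snd).stronglyMeasurable
      exact this.measurable

lemma reachAvoidValue_bounds {n : ℕ}
    (κ : Kernel (Fin n → ℝ) (Fin n → ℝ)) [IsMarkovKernel κ]
    (Xs Xr : Set (Fin n → ℝ)) (hXs : MeasurableSet Xs) (hXr : MeasurableSet Xr) :
    ∀ k x, 0 ≤ reachAvoidValue κ Xs Xr k x ∧ reachAvoidValue κ Xs Xr k x ≤ 1 := by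
  intro k
  induction k with
  | zero =>
      intro x
      simp only [reachAvoidValue]
      split <;> norm_num
  | succ k ih =>
      intro x
      have hint : Integrable (fun y => reachAvoidValue κ Xs Xr k y) (κ x) := by
        refine (integrable_const (1 : ℝ)).mono'
          ((reachAvoidValue_measurable κ Xs Xr hXs hXr k).aestronglyMeasurable) ?_
        filter_upwards with y
        rw [Real.norm_eq_abs, abs_le]
        exact ⟨by linarith [(ih y).1], (ih y).2⟩
      simp only [reachAvoidValue]
      split
      · norm_num
      split
      · constructor
        · exact integral_nonneg fun y => (ih y).1
        · calc (∫ y, reachAvoidValue κ Xs Xr k y ∂(κ x)) ≤ ∫ _, (1:ℝ) ∂(κ x) :=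
                integral_mono hint (integrable_const 1) fun y => (ih y).2
            _ = 1 := by simp
      · norm_num

lemma reachAvoidValue_integrable {n : ℕ}
    (κ : Kernel (Fin n → ℝ) (Fin n → ℝ)) [IsMarkovKernel κ]
    (Xs Xr : Set (Fin n → ℝ)) (hXs : MeasurableSet Xs) (hXr : MeasurableSet Xr)
    (k : ℕ) (x : Fin n → ℝ) :
    Integrable (fun y => reachAvoidValue κ Xs Xr k y) (κ x) := by
  refine (integrable_const (1 : ℝ)).mono'
    ((reachAvoidValue_measurable κ Xs Xr hXs hXr k).aestronglyMeasurable) ?_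
  filter_upwards with y
  rw [Real.norm_eq_abs, abs_le]
  have h := reachAvoidValue_bounds κ Xs Xr hXs hXr k y
  exact ⟨by linarith [h.1], h.2⟩

/-- Under the time-varying certificate conditions (a)–(f) with horizon `H`,
`V_H(x) ≥ γ − (α_H + Σ_{i=1}^H β_i)` for every `x ∈ X₀`; in particular
`inf_{x ∈ X₀} V_H(x) ≥ γ − (α_H + Σ_{i=1}^H β_i)`. -/
theorem timeVarying_certificate_value_bound_on_initial
    {n : ℕ} (κ : Kernel (Fin n → ℝ) (Fin n → ℝ)) [IsMarkovKernel κ]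
    (Xs Xr X0 : Set (Fin n → ℝ))
    (hXs : MeasurableSet Xs) (hXr : MeasurableSet Xr)
    (hXrXs : Xr ⊆ Xs) (hX0Xs : X0 ⊆ Xs)
    (H : ℕ) (γ : ℝ) (α β : ℕ → ℝ)
    (hγ : 0 ≤ γ) (hα : ∀ i ≤ H, 0 ≤ α i) (hβ : ∀ i, 1 ≤ i → i ≤ H → 0 ≤ β i)
    (R : (Fin n → ℝ) → ℕ → ℝ)
    (hRmeas : ∀ i ≤ H, Measurable fun x => R x i)
    (hRint : ∀ i ≤ H, ∀ x, Integrable (fun y => R y i) (κ x))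
    (ha : ∀ x, ∀ i ≤ H, 0 ≤ R x i)
    (hb : ∀ x ∈ Xr, ∀ i ≤ H, R x i ≤ 1 + α i)
    (hc : ∀ x ∈ Xsᶜ, ∀ i ≤ H, R x i ≤ α i)
    (hd : ∀ x ∈ Xs \ Xr, R x 0 ≤ α 0)
    (he : ∀ x ∈ Xs \ Xr, ∀ i, 1 ≤ i → i ≤ H →
      R x i ≤ (∫ y, R y (i - 1) ∂(κ x)) - α (i - 1) + α i + β i)
    (hf : ∀ x ∈ X0, γ ≤ R x H) :
    (∀ x ∈ X0,
      γ - (α H + ∑ i ∈ Finset.Icc 1 H, β i) ≤ reachAvoidValue κ Xs Xr H x) ∧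
    (X0.Nonempty →
      γ - (α H + ∑ i ∈ Finset.Icc 1 H, β i) ≤
        sInf (reachAvoidValue κ Xs Xr H '' X0)) := by
  set V := reachAvoidValue κ Xs Xr with hV
  -- key induction: R x k ≤ V k x + α k + ∑ β
  have key : ∀ k ≤ H, ∀ x, R x k ≤ V k x + α k + ∑ i ∈ Finset.Icc 1 k, β i := by
    intro k
    induction k with
    | zero =>
        intro _ x
        simp only [Finset.Icc_self, Finset.Icc_eq_empty_of_lt (by norm_num : (1:ℕ) > 0)]
        by_cases hxr : x ∈ Xr
        · have := hb x hxr 0 (Nat.zero_le _)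
          simp only [hV, reachAvoidValue, if_pos hxr]
          simpa using this
        · by_cases hxs : x ∈ Xs
          · have := hd x ⟨hxs, hxr⟩
            simp only [hV, reachAvoidValue, if_neg hxr]
            simpa using this
          · have := hc x hxs 0 (Nat.zero_le _)
            simp only [hV, reachAvoidValue, if_neg hxr]
            simpa using this
    | succ k ih =>
        intro hk x
        have hkH : k ≤ H := Nat.le_of_succ_le hk
        have hsum : ∑ i ∈ Finset.Icc 1 (k+1), β i
            = (∑ i ∈ Finset.Icc 1 k, β i) + β (k+1) :=
          Finset.sum_Icc_succ_top (Nat.one_le_iff_ne_zero.mpr (Nat.succ_ne_zero k)) β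
        by_cases hxr : x ∈ Xr
        · have := hb x hxr (k+1) hk
          simp only [hV, reachAvoidValue, if_pos hxr]
          have hβsum : 0 ≤ ∑ i ∈ Finset.Icc 1 (k+1), β i := by
            apply Finset.sum_nonneg
            intro i hi
            rw [Finset.mem_Icc] at hi
            exact hβ i hi.1 (le_trans hi.2 hk)
          linarith
        · by_cases hxs : x ∈ Xs
          · -- main case
            have hVint := reachAvoidValue_integrable κ Xs Xr hXs hXr k x
            have hRint' := hRint k hkH x
            have he' := he x ⟨hxs, hxr⟩ (k+1) (Nat.le_add_left 1 k) hk
            simp only [Nat.add_sub_cancel] at he'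
            have hmono : (∫ y, R y k ∂(κ x))
                ≤ ∫ y, (V k y + α k + ∑ i ∈ Finset.Icc 1 k, β i) ∂(κ x) := by
              refine integral_mono hRint' ?_ (fun y => ih hkH y)
              exact (hVint.add (integrable_const _)).add (integrable_const _)
            have h1 : Integrable (fun y => V k y + α k) (κ x) :=
              hVint.add (integrable_const _)
            have heval : ∫ y, (V k y + α k + ∑ i ∈ Finset.Icc 1 k, β i) ∂(κ x)
                = (∫ y, V k y ∂(κ x)) + α k + ∑ i ∈ Finset.Icc 1 k, β i := by
              rw [integral_add h1 (integrable_const _), integral_add hVint (integrable_const _)]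
              simp
              rfl
            simp only [hV, reachAvoidValue, if_neg hxr, if_pos hxs]
            rw [hsum]
            have : R x (k+1) ≤ (∫ y, R y k ∂(κ x)) - α k + α (k+1) + β (k+1) := he'
            linarith [hmono.trans_eq heval]
          · have := hc x hxs (k+1) hk
            simp only [hV, reachAvoidValue, if_neg hxr, if_neg hxs]
            have hβsum : 0 ≤ ∑ i ∈ Finset.Icc 1 (k+1), β i := by
              apply Finset.sum_nonneg
              intro i hi
              rw [Finset.mem_Icc] at hi
              exact hβ i hi.1 (le_trans hi.2 hk)
            linarith
  have main : ∀ x ∈ X0,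
      γ - (α H + ∑ i ∈ Finset.Icc 1 H, β i) ≤ reachAvoidValue κ Xs Xr H x := by
    intro x hx
    have h1 := hf x hx
    have h2 := key H le_rfl x
    simp only [hV] at h2
    linarith
  refine ⟨main, fun hne => ?_⟩
  apply le_csInf (hne.image _)
  rintro b ⟨x, hx, rfl⟩
  exact main x hx
end
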